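/- For every λ ∈ ℂ and all a, b ∈ {1,2,3} with a ≠ b, the quadratic monomial x_a x_b ∈ U_λ satisfies □(x_a x_b) = 0, where □ is the wave operator; consequently every linear combination Σ_{a≠b} α_{ab} x_a x_b lies in the kernel of □. -/

import Mathlib

noncomputable section
open TensorProduct

/-- The bracket of `g_λ` on coordinates: `[x₁,x₂] = 2λx₂`, `[x₁,x₃] = 2λx₃`, `[x₂,x₃] = 0`. -/
def gbr (l : ℂ) (u v : Fin 3 → ℂ) : Fin 3 → ℂ :=
  ![0, 2 * l * (u 0 * v 1 - u 1 * v 0), 2 * l * (u 0 * v 2 - u 2 * v 0)]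

lemma gbr_add_left (l : ℂ) (u v w : Fin 3 → ℂ) :
    gbr l (u + v) w = gbr l u w + gbr l v w := by
  funext i; fin_cases i <;> simp [gbr] <;> ring

lemma gbr_add_right (l : ℂ) (u v w : Fin 3 → ℂ) :
    gbr l u (v + w) = gbr l u v + gbr l u w := by
  funext i; fin_cases i <;> simp [gbr] <;> ring

lemma gbr_self (l : ℂ) (u : Fin 3 → ℂ) : gbr l u u = 0 := by
  funext i; fin_cases i <;> simp [gbr] <;> ring_nf <;> tauto

lemma gbr_leibniz (l : ℂ) (u v w : Fin 3 → ℂ) :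
    gbr l u (gbr l v w) = gbr l (gbr l u v) w + gbr l v (gbr l u w) := by
  funext i; fin_cases i <;> simp [gbr] <;> ring

lemma gbr_smul_right (l c : ℂ) (u v : Fin 3 → ℂ) :
    gbr l u (c • v) = c • gbr l u v := by
  funext i; fin_cases i <;> simp [gbr] <;> ring

/-- The underlying type of the Lie algebra `g_λ`. -/
def G (_l : ℂ) : Type := Fin 3 → ℂ

instance (l : ℂ) : AddCommGroup (G l) := inferInstanceAs (AddCommGroup (Fin 3 → ℂ))
instance (l : ℂ) : Module ℂ (G l) := inferInstanceAs (Module ℂ (Fin 3 → ℂ))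

instance (l : ℂ) : LieRing (G l) :=
  { (inferInstanceAs (AddCommGroup (G l)) : AddCommGroup (G l)) with
    bracket := fun u v => gbr l u v
    add_lie := fun u v w => gbr_add_left l u v w
    lie_add := fun u v w => gbr_add_right l u v w
    lie_self := fun u => gbr_self l u
    leibniz_lie := fun u v w => gbr_leibniz l u v w }

instance (l : ℂ) : LieAlgebra ℂ (G l) :=
  { lie_smul := fun c u v => gbr_smul_right l c u v }

/-- The universal enveloping algebra `U_λ`. -/
abbrev Uenv (l : ℂ) := UniversalEnvelopingAlgebra ℂ (G l)

attribute [local instance 100] LieRing.ofAssociativeRing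

/-- The canonical embedding `ι : g_λ → U_λ`. -/
def iotaU (l : ℂ) : G l →ₗ⁅ℂ⁆ Uenv l := UniversalEnvelopingAlgebra.ι ℂ

/-- The basis vector `x_a` of `g_λ` (0-indexed). -/
def xvec (l : ℂ) (a : Fin 3) : G l := (Pi.single a 1 : Fin 3 → ℂ)

/-- The generator `x_a` inside `U_λ`. -/
def Xgen (l : ℂ) (a : Fin 3) : Uenv l := iotaU l (xvec l a)

abbrev V3 := Fin 3 → ℂ

/-- `Ω¹ = ℂ³ ⊗ U_λ`. -/
abbrev Om1 (l : ℂ) := V3 ⊗[ℂ] Uenv l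

/-- The representation matrices `ρ(x₁) = λ diag(1,1,-1)`, `ρ(x₂) = λE₁₃`, `ρ(x₃) = λE₂₃`. -/
def rhoM (l : ℂ) : Fin 3 → Matrix (Fin 3) (Fin 3) ℂ :=
  ![l • Matrix.diagonal ![1, 1, -1],
    l • Matrix.single 0 2 1,
    l • Matrix.single 1 2 1]

/-- The representation `ρ` on a general element of `g_λ`. -/
def rhoLin (l : ℂ) (u : G l) : Matrix (Fin 3) (Fin 3) ℂ :=
  u 0 • rhoM l 0 + u 1 • rhoM l 1 + u 2 • rhoM l 2

/-- Right action of `U_λ` on `Ω¹`: `(v ⊗ u)·w = v ⊗ (u*w)`. -/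
def rAct (l : ℂ) (w : Uenv l) : Om1 l →ₗ[ℂ] Om1 l :=
  LinearMap.lTensor V3 (LinearMap.mulRight ℂ w)

/-- Left action of `x ∈ g_λ` on `Ω¹`: `x·(v ⊗ u) = ρ(x)v ⊗ u + v ⊗ (x*u)`. -/
def lActVec (l : ℂ) (x : G l) : Om1 l →ₗ[ℂ] Om1 l :=
  LinearMap.rTensor (Uenv l) (Matrix.toLin' (rhoLin l x)) +
    LinearMap.lTensor V3 (LinearMap.mulLeft ℂ (iotaU l x))

/-- The invariant 1-forms: `dx₁ = -e₃`, `dx₂ = e₁`, `dx₃ = e₂` (as vectors in `ℂ³`). -/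
def omegaV : Fin 3 → V3 :=
  ![-(Pi.single 2 1), Pi.single 0 1, Pi.single 1 1]

/-- The basic 1-forms `dx_a = ω_a ⊗ 1  ∈ Ω¹`. -/
def dx (l : ℂ) (a : Fin 3) : Om1 l := (omegaV a) ⊗ₜ[ℂ] (1 : Uenv l)

/-!
Write `∂ᵉ` for the coefficient of `dx_e` in `d`. By the Leibniz rule,
`d(x_a x_b) = ρ(x_a)dx_b + dx_b·x_a + dx_a·x_b`, so `∂ᵉ(x_a x_b) = c·1 + δ_{eb} x_a + δ_{ea} x_b`
for a scalar `c`. Since `∂ᵉ1 = 0` and `∂ᵉx_a = δ_{ea}`, applying `∂ᵉ` once more leaves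
`2 δ_{ea} δ_{eb}`, which vanishes for `a ≠ b`. The partial derivatives are linear, being
coefficients of the linear map `d`, so the wave operator kills mixed combinations as well.
-/

def omegaCoord : Fin 3 → (V3 →ₗ[ℂ] ℂ) :=
  ![-(LinearMap.proj 2), LinearMap.proj 0, LinearMap.proj 1]

lemma omegaCoord_omegaV (e a : Fin 3) : omegaCoord e (omegaV a) = if e = a then 1 else 0 := by
  fin_cases e <;> fin_cases a <;> simp [omegaCoord, omegaV]

def dxCoord (l : ℂ) (e : Fin 3) : Om1 l →ₗ[ℂ] Uenv l :=
  (TensorProduct.lid ℂ (Uenv l)).toLinearMap ∘ₗ LinearMap.rTensor (Uenv l) (omegaCoord e)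

lemma dxCoord_tmul (l : ℂ) (e : Fin 3) (v : V3) (u : Uenv l) :
    dxCoord l e (v ⊗ₜ[ℂ] u) = omegaCoord e v • u := by
  simp [dxCoord]

lemma dxCoord_omegaV_tmul (l : ℂ) (e a : Fin 3) (u : Uenv l) :
    dxCoord l e (omegaV a ⊗ₜ[ℂ] u) = if e = a then u else 0 := by
  rw [dxCoord_tmul, omegaCoord_omegaV]
  split_ifs <;> simp

lemma dxCoord_rAct_dx (l : ℂ) (e a : Fin 3) (w : Uenv l) :
    dxCoord l e (rAct l w (dx l a)) = if e = a then w else 0 := by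
  simp only [rAct, dx, LinearMap.lTensor_tmul, LinearMap.mulRight_apply, one_mul,
    dxCoord_omegaV_tmul]

def partialDeriv (l : ℂ) (d : Uenv l →ₗ[ℂ] Om1 l) (e : Fin 3) : Uenv l →ₗ[ℂ] Uenv l :=
  dxCoord l e ∘ₗ d

def waveOp (l : ℂ) (d : Uenv l →ₗ[ℂ] Om1 l) : Uenv l →ₗ[ℂ] Uenv l :=
  ∑ e : Fin 3, partialDeriv l d e ∘ₗ partialDeriv l d e

section PartialDerivatives

variable {l : ℂ} {Φ : Uenv l →ₐ[ℂ] Module.End ℂ (Om1 l)} {d : Uenv l →ₗ[ℂ] Om1 l}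

lemma eq_partialDeriv_of_d_eq_sum {P : Fin 3 → Uenv l → Uenv l}
    (hP : ∀ f : Uenv l,
      d f = rAct l (P 0 f) (dx l 0) + rAct l (P 1 f) (dx l 1) + rAct l (P 2 f) (dx l 2))
    (e : Fin 3) (f : Uenv l) : P e f = partialDeriv l d e f := by
  rw [partialDeriv, LinearMap.comp_apply, hP f]
  fin_cases e <;> simp [dxCoord_rAct_dx]

lemma sum_eq_waveOp_of_d_eq_sum {P : Fin 3 → Uenv l → Uenv l}
    (hP : ∀ f : Uenv l,
      d f = rAct l (P 0 f) (dx l 0) + rAct l (P 1 f) (dx l 1) + rAct l (P 2 f) (dx l 2))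
    (f : Uenv l) : ∑ e : Fin 3, P e (P e f) = waveOp l d f := by
  simp [waveOp, eq_partialDeriv_of_d_eq_sum hP]

lemma d_Xgen_mul_Xgen (hΦ : ∀ x : G l, Φ (iotaU l x) = lActVec l x)
    (hdx : ∀ a : Fin 3, d (Xgen l a) = dx l a)
    (hleib : ∀ u v : Uenv l, d (u * v) = Φ u (d v) + rAct l v (d u)) (a b : Fin 3) :
    d (Xgen l a * Xgen l b) =
      Matrix.toLin' (rhoLin l (xvec l a)) (omegaV b) ⊗ₜ[ℂ] (1 : Uenv l)
        + omegaV b ⊗ₜ[ℂ] Xgen l a + omegaV a ⊗ₜ[ℂ] Xgen l b := by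
  rw [hleib, hdx, hdx, Xgen, hΦ]
  simp only [lActVec, dx, rAct, LinearMap.add_apply, LinearMap.rTensor_tmul,
    LinearMap.lTensor_tmul, LinearMap.mulLeft_apply, LinearMap.mulRight_apply, mul_one, one_mul]

lemma partialDeriv_Xgen_mul_Xgen (hΦ : ∀ x : G l, Φ (iotaU l x) = lActVec l x)
    (hdx : ∀ a : Fin 3, d (Xgen l a) = dx l a)
    (hleib : ∀ u v : Uenv l, d (u * v) = Φ u (d v) + rAct l v (d u)) (e a b : Fin 3) :
    partialDeriv l d e (Xgen l a * Xgen l b) =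
      omegaCoord e (Matrix.toLin' (rhoLin l (xvec l a)) (omegaV b)) • (1 : Uenv l)
        + (if e = b then Xgen l a else 0) + (if e = a then Xgen l b else 0) := by
  rw [partialDeriv, LinearMap.comp_apply, d_Xgen_mul_Xgen hΦ hdx hleib, map_add, map_add,
    dxCoord_tmul, dxCoord_omegaV_tmul, dxCoord_omegaV_tmul]

lemma partialDeriv_one (hd1 : d 1 = 0) (e : Fin 3) :
    partialDeriv l d e 1 = 0 := by
  rw [partialDeriv, LinearMap.comp_apply, hd1, map_zero]

lemma partialDeriv_Xgen (hdx : ∀ a : Fin 3, d (Xgen l a) = dx l a) (e a : Fin 3) :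
    partialDeriv l d e (Xgen l a) = if e = a then 1 else 0 := by
  rw [partialDeriv, LinearMap.comp_apply, hdx, dx, dxCoord_omegaV_tmul]

lemma waveOp_Xgen_mul_Xgen (hΦ : ∀ x : G l, Φ (iotaU l x) = lActVec l x)
    (hd1 : d 1 = 0) (hdx : ∀ a : Fin 3, d (Xgen l a) = dx l a)
    (hleib : ∀ u v : Uenv l, d (u * v) = Φ u (d v) + rAct l v (d u))
    {a b : Fin 3} (hab : a ≠ b) : waveOp l d (Xgen l a * Xgen l b) = 0 := by
  rw [waveOp, LinearMap.sum_apply]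
  refine Finset.sum_eq_zero fun e _ => ?_
  rw [LinearMap.comp_apply, partialDeriv_Xgen_mul_Xgen hΦ hdx hleib]
  -- `e` cannot equal both `a` and `b`, so at most one of `δ_{ea}`, `δ_{eb}` is nonzero
  by_cases hea : e = a <;> by_cases heb : e = b
  · exact absurd (hea.symm.trans heb) hab
  all_goals simp [hea, heb, hab, hab.symm, partialDeriv_one hd1, partialDeriv_Xgen hdx]

end PartialDerivatives

theorem wave_operator_kills_mixed_quadratics_general (l : ℂ)
    (Φ : Uenv l →ₐ[ℂ] Module.End ℂ (Om1 l))
    (hΦ : ∀ x : G l, Φ (iotaU l x) = lActVec l x)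
    (d : Uenv l →ₗ[ℂ] Om1 l)
    (hd1 : d 1 = 0) (hdx : ∀ a : Fin 3, d (Xgen l a) = dx l a)
    (hleib : ∀ u v : Uenv l, d (u * v) = Φ u (d v) + rAct l v (d u))
    (P : Fin 3 → Uenv l → Uenv l)
    (hP : ∀ f : Uenv l,
      d f = rAct l (P 0 f) (dx l 0) + rAct l (P 1 f) (dx l 1) + rAct l (P 2 f) (dx l 2)) :
    (∀ a b : Fin 3, a ≠ b →
      (∑ e : Fin 3, P e (P e (Xgen l a * Xgen l b))) = 0) ∧
    ∀ α : Fin 3 → Fin 3 → ℂ,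
      (∑ e : Fin 3, P e (P e
        (∑ a : Fin 3, ∑ b : Fin 3,
          if a ≠ b then α a b • (Xgen l a * Xgen l b) else 0))) = 0 := by
  simp only [sum_eq_waveOp_of_d_eq_sum hP]
  have hmixed := fun (a b : Fin 3) (hab : a ≠ b) => waveOp_Xgen_mul_Xgen hΦ hd1 hdx hleib hab
  refine ⟨hmixed, fun α => ?_⟩
  simp only [map_sum]
  refine Finset.sum_eq_zero fun a _ => Finset.sum_eq_zero fun b _ => ?_
  split_ifs with hab
  · rw [map_smul, hmixed a b hab, smul_zero]
  · exact map_zero _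

/-- Quadratic monomials `x_a x_b` with `a ≠ b` are massless modes: `□(x_a x_b) = 0`;
consequently every linear combination `Σ_{a≠b} α_{ab} x_a x_b` lies in `ker □`. Here
the partial derivatives `∂ᵃ` are defined by `d f = Σ_a dx_a·∂ᵃf` and `□f = Σ_a ∂ᵃ∂ᵃf`. -/
theorem wave_operator_kills_mixed_quadratics (l : ℂ)
    (Φ : Uenv l →ₐ[ℂ] Module.End ℂ (Om1 l))
    (hΦ : ∀ x : G l, Φ (iotaU l x) = lActVec l x)
    (d : Uenv l →ₗ[ℂ] Om1 l)
    (hd1 : d 1 = 0) (hdx : ∀ a : Fin 3, d (Xgen l a) = dx l a)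
    (hleib : ∀ u v : Uenv l, d (u * v) = Φ u (d v) + rAct l v (d u))
    (P : Fin 3 → Uenv l → Uenv l)
    (hP : ∀ f : Uenv l,
      d f = rAct l (P 0 f) (dx l 0) + rAct l (P 1 f) (dx l 1) + rAct l (P 2 f) (dx l 2))
    (hPlin : ∀ (a : Fin 3) (c : ℂ) (f g : Uenv l), P a (c • f + g) = c • P a f + P a g) :
    (∀ a b : Fin 3, a ≠ b →
      (∑ e : Fin 3, P e (P e (Xgen l a * Xgen l b))) = 0) ∧
    ∀ α : Fin 3 → Fin 3 → ℂ,
      (∑ e : Fin 3, P e (P e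
        (∑ a : Fin 3, ∑ b : Fin 3,
          if a ≠ b then α a b • (Xgen l a * Xgen l b) else 0))) = 0 :=
  wave_operator_kills_mixed_quadratics_general l Φ hΦ d hd1 hdx hleib P hP
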